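/- arXiv:2504.19000 — 2 statements merged into one kernel-verified Lean document; each statement's English description precedes it below -/
import Mathlib

section
/- Let T ≥ 1, let (a_t)_{0≤t≤T+1}, (b_t)_{0≤t≤T}, (c_t)_{0≤t≤T} be nonnegative reals with a_0 = b_0 = c_0 = 0, let d ≥ 0, let (m_t)_{0≤t≤T} and (β_t)_{0≤t≤T} be nonnegative reals, and let (μ_t) be real scalars. Assume that for every t ≤ T: a_{t+1} ≤ m_t·(b_t + c_t) + β_t·d, b_{t+1} ≤ a_{t+1} + c_t (for t+1 ≤ T), and c_{t+1} ≤ |μ_t|·(2·a_{t+1} + c_t) (for t+1 ≤ T). Then for every 1 ≤ t ≤ T, a_{t+1} ≤ β_t·d + Σ_{i=1}^{t} w_i^t·a_i, where w_i^t = 2·m_t·(|μ_{t−1}| + 1)·Π_{j=i−1}^{t−2} |μ_j| (products over empty index sets equal 1). -/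
/-- Combined perturbation recursion (equation (A.9)) in the proof of Proposition 3 of
the paper: substituting the auxiliary- and dual-variable recursions into the
primal-variable bound yields, for every `1 ≤ t ≤ T`,
`a_{t+1} ≤ β_t d + Σ_{i=1}^{t} w_i^t a_i` with
`w_i^t = 2 m_t (|μ_{t−1}| + 1) Π_{j=i−1}^{t−2} |μ_j|`. -/
theorem stmt10 (T : ℕ) (hT : 1 ≤ T)
    (a b c : ℕ → ℝ) (m β μ : ℕ → ℝ) (d : ℝ)
    (ha : ∀ t ≤ T + 1, 0 ≤ a t) (hb : ∀ t ≤ T, 0 ≤ b t) (hc : ∀ t ≤ T, 0 ≤ c t)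
    (ha0 : a 0 = 0) (hb0 : b 0 = 0) (hc0 : c 0 = 0) (hd : 0 ≤ d)
    (hm : ∀ t ≤ T, 0 ≤ m t) (hβ : ∀ t ≤ T, 0 ≤ β t)
    (hra : ∀ t ≤ T, a (t + 1) ≤ m t * (b t + c t) + β t * d)
    (hrb : ∀ t, t + 1 ≤ T → b (t + 1) ≤ a (t + 1) + c t)
    (hrc : ∀ t, t + 1 ≤ T → c (t + 1) ≤ |μ t| * (2 * a (t + 1) + c t)) :
    ∀ t, 1 ≤ t → t ≤ T →
      a (t + 1) ≤ β t * d + ∑ i ∈ Finset.Icc 1 t,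
        (2 * m t * (|μ (t - 1)| + 1) * ∏ j ∈ Finset.Ico (i - 1) (t - 1), |μ j|) * a i := by
  have clem : ∀ s, s ≤ T →
      c s ≤ ∑ i ∈ Finset.Icc 1 s, 2 * (∏ j ∈ Finset.Ico (i - 1) s, |μ j|) * a i := by
    intro s
    induction s with
    | zero => intro _; simp [hc0]
    | succ s ih =>
      intro hs
      have hsT : s ≤ T := Nat.le_of_succ_le hs
      have h1 := hrc s hs
      have h2 := ih hsT
      have habs : (0:ℝ) ≤ |μ s| := abs_nonneg _
      calc c (s + 1) ≤ |μ s| * (2 * a (s + 1) + c s) := h1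
        _ ≤ |μ s| * (2 * a (s + 1) +
              ∑ i ∈ Finset.Icc 1 s, 2 * (∏ j ∈ Finset.Ico (i - 1) s, |μ j|) * a i) := by
            apply mul_le_mul_of_nonneg_left _ habs
            linarith
        _ = 2 * (∏ j ∈ Finset.Ico (s + 1 - 1) (s + 1), |μ j|) * a (s + 1) +
              ∑ i ∈ Finset.Icc 1 s, 2 * (∏ j ∈ Finset.Ico (i - 1) (s + 1), |μ j|) * a i := by
            rw [mul_add, Finset.mul_sum]
            congr 1
            · have : (∏ j ∈ Finset.Ico (s + 1 - 1) (s + 1), |μ j|) = |μ s| := by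
                simp
              rw [this]; ring
            · apply Finset.sum_congr rfl
              intro i hi
              have hile : i - 1 ≤ s := by
                have := (Finset.mem_Icc.mp hi).2
                omega
              rw [Finset.prod_Ico_succ_top hile]
              ring
        _ = ∑ i ∈ Finset.Icc 1 (s + 1), 2 * (∏ j ∈ Finset.Ico (i - 1) (s + 1), |μ j|) * a i := by
            rw [Finset.sum_Icc_succ_top (Nat.one_le_iff_ne_zero.mpr (Nat.succ_ne_zero s))]
            ring
  intro t ht1 htT
  obtain ⟨s, rfl⟩ : ∃ s, t = s + 1 := ⟨t - 1, by omega⟩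
  have hsT : s ≤ T := by omega
  have hb' := hrb s htT
  have hc' := hrc s htT
  have ha' := hra (s + 1) htT
  have hcs := clem s hsT
  set u : ℝ := |μ s| with hu
  have hu0 : (0:ℝ) ≤ u := abs_nonneg _
  set K : ℝ := m (s + 1) with hK
  have hK0 : (0:ℝ) ≤ K := hm (s + 1) htT
  set S : ℝ := ∑ i ∈ Finset.Icc 1 s, 2 * (∏ j ∈ Finset.Ico (i - 1) s, |μ j|) * a i with hS
  have ha1 : (0:ℝ) ≤ a (s + 1) := ha (s + 1) (by omega)
  have hcs0 : (0:ℝ) ≤ c s := hc s hsT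
  have key : b (s + 1) + c (s + 1) ≤ (2 + 2 * u) * a (s + 1) + (1 + u) * S := by
    have h3 : (1 + u) * c s ≤ (1 + u) * S :=
      mul_le_mul_of_nonneg_left hcs (by linarith)
    nlinarith
  have main : a (s + 2) ≤ K * ((2 + 2 * u) * a (s + 1) + (1 + u) * S) + β (s + 1) * d := by
    have := mul_le_mul_of_nonneg_left key hK0
    calc a (s + 1 + 1) ≤ K * (b (s + 1) + c (s + 1)) + β (s + 1) * d := ha'
      _ ≤ K * ((2 + 2 * u) * a (s + 1) + (1 + u) * S) + β (s + 1) * d := by linarith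
  have hsimp : (s + 1 - 1 : ℕ) = s := rfl
  rw [hsimp]
  rw [Finset.sum_Icc_succ_top (Nat.one_le_iff_ne_zero.mpr (Nat.succ_ne_zero s))]
  have hsum : ∑ i ∈ Finset.Icc 1 s,
      (2 * m (s + 1) * (|μ s| + 1) * ∏ j ∈ Finset.Ico (i - 1) s, |μ j|) * a i
      = K * (1 + u) * S := by
    rw [hS, Finset.mul_sum]
    apply Finset.sum_congr rfl
    intro i _
    rw [hK, hu]; ring
  rw [hsum]
  have hlast : (2 * m (s + 1) * (|μ s| + 1) * ∏ j ∈ Finset.Ico (s + 1 - 1) s, |μ j|) * a (s + 1)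
      = 2 * K * (u + 1) * a (s + 1) := by
    rw [show (s + 1 - 1 : ℕ) = s from rfl]
    simp [hK, hu]
  rw [hlast]
  nlinarith [main]
end

section
/- Let T ≥ 1, let (a_t)_{0≤t≤T+1}, (b_t)_{0≤t≤T}, (c_t)_{0≤t≤T} be nonnegative reals with a_0 = b_0 = c_0 = 0, let d ≥ 0, let (m_t)_{0≤t≤T} and (β_t)_{0≤t≤T} be nonnegative reals, and let (μ_t) be real scalars. Assume that for every t ≤ T: a_{t+1} ≤ m_t·(b_t + c_t) + β_t·d, b_{t+1} ≤ a_{t+1} + c_t (for t+1 ≤ T), and c_{t+1} ≤ |μ_t|·(2·a_{t+1} + c_t) (for t+1 ≤ T). Define w_i^t = 2·m_t·(|μ_{t−1}| + 1)·Π_{j=i−1}^{t−2} |μ_j| for 1 ≤ i ≤ t ≤ T (products over empty index sets equal 1), and assume the monotonicity condition w_i^t ≤ w_i^T for all 1 ≤ i ≤ t ≤ T. Then a_{T+1} ≤ (max_{0≤t≤T} β_t) · Π_{i=1}^{T} (1 + w_i^T) · d. -/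
/-!
Bounding `c_n` by unrolling its recursion and substituting into the recursions for `a` and `b`
shows that `a_{t+1} ≤ β_t d + Σ_{i ≤ t} w_i^t a_i`. Dominating `β_t` by its maximum and `w_i^t`
by `w_i^T` turns this into an inequality with weights independent of `t`, to which the discrete
Gronwall inequality applies.
-/

open Finset

theorem le_mul_prod_one_add_of_le_add_sum {u w : ℕ → ℝ} {K : ℝ} {n : ℕ}
    (hw : ∀ i ∈ Icc 1 n, 0 ≤ w i)
    (hu : ∀ t ≤ n, u (t + 1) ≤ K + ∑ i ∈ Icc 1 t, w i * u i) :
    ∀ t ≤ n, u (t + 1) ≤ K * ∏ i ∈ Icc 1 t, (1 + w i) := by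
  intro t
  induction t using Nat.strong_induction_on with
  | _ t ih =>
  intro ht
  have hsum : ∑ i ∈ Icc 1 t, w i * u i
      ≤ ∑ i ∈ Icc 1 t, w i * (K * ∏ j ∈ Icc 1 t with j < i, (1 + w j)) := by
    refine sum_le_sum fun i hi => ?_
    obtain ⟨hi1, hit⟩ := mem_Icc.mp hi
    refine mul_le_mul_of_nonneg_left ?_ (hw i (mem_Icc.mpr ⟨hi1, hit.trans ht⟩))
    obtain ⟨k, rfl⟩ : ∃ k, i = k + 1 := ⟨i - 1, by omega⟩
    have hfilter : {j ∈ Icc 1 t | j < k + 1} = Icc 1 k := by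
      ext j
      simp only [mem_filter, mem_Icc]
      omega
    rw [hfilter]
    exact ih k (by omega) (by omega)
  calc u (t + 1) ≤ K + ∑ i ∈ Icc 1 t, w i * u i := hu t ht
    _ ≤ K + ∑ i ∈ Icc 1 t, w i * (K * ∏ j ∈ Icc 1 t with j < i, (1 + w j)) := by gcongr
    _ = K * ∏ i ∈ Icc 1 t, (1 + w i) := by
      rw [prod_one_add_ordered, mul_add, mul_one, mul_sum]
      simp_rw [mul_left_comm]

theorem le_sum_mul_prod_of_le_mul_add {c x r : ℕ → ℝ} {n : ℕ} (hc0 : c 0 = 0)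
    (hr : ∀ t, 0 ≤ r t) (hc : ∀ t, t + 1 ≤ n → c (t + 1) ≤ r t * (x (t + 1) + c t)) :
    ∀ t ≤ n, c t ≤ ∑ i ∈ Icc 1 t, x i * ∏ j ∈ Ico (i - 1) t, r j := by
  intro t ht
  induction t with
  | zero => simp [hc0]
  | succ t ih =>
    calc c (t + 1) ≤ r t * (x (t + 1) + c t) := hc t ht
      _ ≤ r t * (x (t + 1) + ∑ i ∈ Icc 1 t, x i * ∏ j ∈ Ico (i - 1) t, r j) := by
        gcongr
        exacts [hr t, ih (by omega)]
      _ = ∑ i ∈ Icc 1 (t + 1), x i * ∏ j ∈ Ico (i - 1) (t + 1), r j := by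
        rw [sum_Icc_succ_top (by omega), Nat.add_sub_cancel, Nat.Ico_succ_singleton,
          prod_singleton, mul_add, mul_sum, add_comm, mul_comm (r t)]
        congr 1
        refine sum_congr rfl fun i hi => ?_
        rw [prod_Ico_succ_top (by grind)]
        ring

/-- The weight `w_i^t` of the paper. -/
def admmWeight (m μ : ℕ → ℝ) (i t : ℕ) : ℝ :=
  2 * m t * (|μ (t - 1)| + 1) * ∏ j ∈ Ico (i - 1) (t - 1), |μ j|

theorem le_add_sum_admmWeight_mul {T : ℕ} {a b c m β μ : ℕ → ℝ} {d : ℝ}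
    (ha : ∀ t ≤ T, 0 ≤ a t) (hb0 : b 0 = 0) (hc0 : c 0 = 0) (hm : ∀ t ≤ T, 0 ≤ m t)
    (hra : ∀ t ≤ T, a (t + 1) ≤ m t * (b t + c t) + β t * d)
    (hrb : ∀ t, t + 1 ≤ T → b (t + 1) ≤ a (t + 1) + c t)
    (hrc : ∀ t, t + 1 ≤ T → c (t + 1) ≤ |μ t| * (2 * a (t + 1) + c t)) :
    ∀ t ≤ T, a (t + 1) ≤ β t * d + ∑ i ∈ Icc 1 t, admmWeight m μ i t * a i := by
  intro t ht
  cases t with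
  | zero => simpa [hb0, hc0] using hra 0 ht
  | succ n =>
    set S := ∑ i ∈ Icc 1 n, 2 * a i * ∏ j ∈ Ico (i - 1) n, |μ j|
    have hcS : c n ≤ S :=
      le_sum_mul_prod_of_le_mul_add hc0 (fun t => abs_nonneg (μ t)) hrc n (by omega)
    have hbc : b (n + 1) + c (n + 1) ≤ (|μ n| + 1) * (2 * a (n + 1) + S) := by
      have := hrb n ht
      have := hrc n ht
      have := ha (n + 1) ht
      have := abs_nonneg (μ n)
      nlinarith
    have hsum : ∑ i ∈ Icc 1 (n + 1), admmWeight m μ i (n + 1) * a i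
        = m (n + 1) * ((|μ n| + 1) * (2 * a (n + 1) + S)) := by
      simp only [admmWeight, Nat.add_sub_cancel]
      rw [sum_Icc_succ_top (by omega), Nat.add_sub_cancel, Ico_self, prod_empty, mul_one]
      have hS : ∑ i ∈ Icc 1 n, 2 * m (n + 1) * (|μ n| + 1) * (∏ j ∈ Ico (i - 1) n, |μ j|) * a i
          = m (n + 1) * (|μ n| + 1) * S := by
        rw [mul_sum]
        exact sum_congr rfl fun _ _ => by ring
      rw [hS]
      ring
    calc a (n + 1 + 1) ≤ m (n + 1) * (b (n + 1) + c (n + 1)) + β (n + 1) * d := hra (n + 1) ht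
      _ ≤ m (n + 1) * ((|μ n| + 1) * (2 * a (n + 1) + S)) + β (n + 1) * d := by
        gcongr
        exact hm _ ht
      _ = β (n + 1) * d + ∑ i ∈ Icc 1 (n + 1), admmWeight m μ i (n + 1) * a i := by
        rw [hsum, add_comm]

theorem stmt11_general (T : ℕ)
    (a b c : ℕ → ℝ) (m β μ : ℕ → ℝ) (d : ℝ)
    (ha : ∀ t ≤ T + 1, 0 ≤ a t)
    (hb0 : b 0 = 0) (hc0 : c 0 = 0) (hd : 0 ≤ d)
    (hm : ∀ t ≤ T, 0 ≤ m t)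
    (hra : ∀ t ≤ T, a (t + 1) ≤ m t * (b t + c t) + β t * d)
    (hrb : ∀ t, t + 1 ≤ T → b (t + 1) ≤ a (t + 1) + c t)
    (hrc : ∀ t, t + 1 ≤ T → c (t + 1) ≤ |μ t| * (2 * a (t + 1) + c t))
    (w : ℕ → ℕ → ℝ)
    (hw : ∀ i t, 1 ≤ i → i ≤ t → t ≤ T →
      w i t = 2 * m t * (|μ (t - 1)| + 1) * ∏ j ∈ Finset.Ico (i - 1) (t - 1), |μ j|)
    (hmono : ∀ i t, 1 ≤ i → i ≤ t → t ≤ T → w i t ≤ w i T) :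
    a (T + 1) ≤
      ((Finset.range (T + 1)).sup' (Finset.nonempty_range_iff.mpr T.succ_ne_zero) β)
        * (∏ i ∈ Finset.Icc 1 T, (1 + w i T)) * d := by
  set B := (range (T + 1)).sup' (nonempty_range_iff.mpr T.succ_ne_zero) β
  have hβB : ∀ t ≤ T, β t ≤ B := fun t ht => le_sup' β (mem_range.mpr (by omega))
  have hwT : ∀ i ∈ Icc 1 T, 0 ≤ w i T := fun i hi => by
    have := hm T le_rfl
    rw [hw i T (mem_Icc.mp hi).1 (mem_Icc.mp hi).2 le_rfl]
    positivity
  have hrec : ∀ t ≤ T, a (t + 1) ≤ B * d + ∑ i ∈ Icc 1 t, w i T * a i := fun t ht =>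
    calc a (t + 1) ≤ β t * d + ∑ i ∈ Icc 1 t, admmWeight m μ i t * a i :=
          le_add_sum_admmWeight_mul (fun t ht => ha t (by omega)) hb0 hc0 hm hra hrb hrc t ht
      _ ≤ B * d + ∑ i ∈ Icc 1 t, w i T * a i := by
        gcongr with i hi
        · exact hβB t ht
        · exact ha i (by grind)
        · obtain ⟨hi1, hit⟩ := mem_Icc.mp hi
          exact (hw i t hi1 hit ht).symm.le.trans (hmono i t hi1 hit ht)
  calc a (T + 1) ≤ B * d * ∏ i ∈ Icc 1 T, (1 + w i T) :=
        le_mul_prod_one_add_of_le_add_sum hwT hrec T le_rfl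
    _ = B * (∏ i ∈ Icc 1 T, (1 + w i T)) * d := by ring

/-- Proposition 3 of the paper, in the conditional form established by its proof:
with `a_t = ‖δˢ_t‖₂`, `b_t = ‖δᵛ_t‖₂`, `c_t = ‖δʸ_t‖₂`, `d = ‖δˣ‖₂`, `m_t = ‖M_t‖₂`,
`β_t = ‖B_t‖₂` satisfying the per-step ADMM perturbation recursions, and assuming the
weights `w_i^t = 2 m_t (|μ_{t−1}| + 1) Π_{j=i−1}^{t−2} |μ_j|` are dominated by `w_i^T`
(as required by the discrete Gronwall inequality), ADMM with `T+1` iterations satisfies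
`a_{T+1} ≤ (max_{0≤t≤T} β_t) Π_{i=1}^{T} (1 + w_i^T) · d`. -/
theorem stmt11 (T : ℕ) (hT : 1 ≤ T)
    (a b c : ℕ → ℝ) (m β μ : ℕ → ℝ) (d : ℝ)
    (ha : ∀ t ≤ T + 1, 0 ≤ a t) (hb : ∀ t ≤ T, 0 ≤ b t) (hc : ∀ t ≤ T, 0 ≤ c t)
    (ha0 : a 0 = 0) (hb0 : b 0 = 0) (hc0 : c 0 = 0) (hd : 0 ≤ d)
    (hm : ∀ t ≤ T, 0 ≤ m t) (hβ : ∀ t ≤ T, 0 ≤ β t)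
    (hra : ∀ t ≤ T, a (t + 1) ≤ m t * (b t + c t) + β t * d)
    (hrb : ∀ t, t + 1 ≤ T → b (t + 1) ≤ a (t + 1) + c t)
    (hrc : ∀ t, t + 1 ≤ T → c (t + 1) ≤ |μ t| * (2 * a (t + 1) + c t))
    (w : ℕ → ℕ → ℝ)
    (hw : ∀ i t, 1 ≤ i → i ≤ t → t ≤ T →
      w i t = 2 * m t * (|μ (t - 1)| + 1) * ∏ j ∈ Finset.Ico (i - 1) (t - 1), |μ j|)
    (hmono : ∀ i t, 1 ≤ i → i ≤ t → t ≤ T → w i t ≤ w i T) :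
    a (T + 1) ≤
      ((Finset.range (T + 1)).sup' (Finset.nonempty_range_iff.mpr T.succ_ne_zero) β)
        * (∏ i ∈ Finset.Icc 1 T, (1 + w i T)) * d :=
  stmt11_general T a b c m β μ d ha hb0 hc0 hd hm hra hrb hrc w hw hmono
end
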